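/- arXiv:2602.13735 — 4 statements merged into one kernel-verified Lean document; each statement's English description precedes it below -/
import Mathlib

section
/- Let u ≥ 1 and m ≥ 1, and let a_0, a_1, …, a_m be natural numbers such that a_i < 2^u for every i ∈ [0..m] and a_{i−1} ≠ a_i for every i ∈ [1..m]. Define b_i = vbit(a_{i−1}, a_i) for i ∈ [1..m]. Then b_{i−1} ≠ b_i for every i ∈ [2..m], and b_i < 2u for every i ∈ [1..m]. -/
/-! `vbit x y` encodes the pair (`lbit x y`, bit of `x` at `lbit x y`) injectively, so
`vbit x y = vbit y z` would force `x` and `y` to agree at `lbit x y`, the position where they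
differ. Two distinct numbers below `2 ^ u` differ at a position below `u`, whence the bound. -/

open scoped Classical

/-- `lbit x y` is the least index `i` such that the `i`-th binary digits of `x` and `y`
differ (defined as `0` if `x = y`). -/
noncomputable def lbit (x y : ℕ) : ℕ :=
  if h : ∃ i, x.testBit i ≠ y.testBit i then Nat.find h else 0

/-- `vbit x y = 2 * lbit x y + a`, where `a` is the bit of `x` at position `lbit x y`. -/
noncomputable def vbit (x y : ℕ) : ℕ :=
  2 * lbit x y + (if Nat.testBit x (lbit x y) then 1 else 0)

section

variable {x y z u : ℕ}

lemma exists_testBit_ne_of_ne (h : x ≠ y) : ∃ i, x.testBit i ≠ y.testBit i := by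
  contrapose! h
  exact Nat.eq_of_testBit_eq h

lemma testBit_lbit_ne (h : x ≠ y) : x.testBit (lbit x y) ≠ y.testBit (lbit x y) := by
  have hex := exists_testBit_ne_of_ne h
  rw [lbit, dif_pos hex]
  exact Nat.find_spec hex

lemma lbit_lt_of_lt_two_pow (hx : x < 2 ^ u) (hy : y < 2 ^ u) (h : x ≠ y) : lbit x y < u := by
  by_contra! hu
  have hpow : 2 ^ u ≤ 2 ^ lbit x y := Nat.pow_le_pow_right two_pos hu
  apply testBit_lbit_ne h
  rw [Nat.testBit_eq_false_of_lt (hx.trans_le hpow), Nat.testBit_eq_false_of_lt (hy.trans_le hpow)]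

lemma vbit_lt_of_lt_two_pow (hx : x < 2 ^ u) (hy : y < 2 ^ u) (h : x ≠ y) : vbit x y < 2 * u := by
  have := lbit_lt_of_lt_two_pow hx hy h
  unfold vbit
  split_ifs <;> omega

lemma vbit_ne_vbit (h : x ≠ y) : vbit x y ≠ vbit y z := by
  intro heq
  have hlbit : lbit x y = lbit y z := by
    unfold vbit at heq
    split_ifs at heq <;> omega
  have hbit : x.testBit (lbit x y) = y.testBit (lbit y z) := by
    unfold vbit at heq
    split_ifs at heq <;> simp_all
  exact testBit_lbit_ne h (hlbit ▸ hbit)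

end

theorem stmt0_general (u m : ℕ) (a b : ℕ → ℕ)
    (ha : ∀ i ≤ m, a i < 2 ^ u)
    (hne : ∀ i, 1 ≤ i → i ≤ m → a (i - 1) ≠ a i)
    (hb : ∀ i, 1 ≤ i → i ≤ m → b i = vbit (a (i - 1)) (a i)) :
    (∀ i, 2 ≤ i → i ≤ m → b (i - 1) ≠ b i) ∧
    (∀ i, 1 ≤ i → i ≤ m → b i < 2 * u) := by
  refine ⟨fun i h2 him => ?_, fun i h1 him => ?_⟩
  · rw [hb (i - 1) (by omega) (by omega), hb i (by omega) him]
    exact vbit_ne_vbit (hne (i - 1) (by omega) (by omega))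
  · rw [hb i h1 him]
    exact vbit_lt_of_lt_two_pow (ha _ (by omega)) (ha _ him) (hne i h1 him)

/-- Given a sequence `a_0, …, a_m` of naturals below `2^u` with adjacent elements distinct,
the sequence `b_i = vbit (a_{i-1}) (a_i)` (for `i ∈ [1..m]`) has adjacent elements distinct
and all its elements are below `2 * u`. -/
theorem stmt0 (u m : ℕ) (hu : 1 ≤ u) (hm : 1 ≤ m) (a b : ℕ → ℕ)
    (ha : ∀ i ≤ m, a i < 2 ^ u)
    (hne : ∀ i, 1 ≤ i → i ≤ m → a (i - 1) ≠ a i)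
    (hb : ∀ i, 1 ≤ i → i ≤ m → b i = vbit (a (i - 1)) (a i)) :
    (∀ i, 2 ≤ i → i ≤ m → b (i - 1) ≠ b i) ∧
    (∀ i, 1 ≤ i → i ≤ m → b i < 2 * u) :=
  stmt0_general u m a b ha hne hb
end

section
/- Let s be a string of length n, let 0 ≤ p ≤ q < n, and suppose that the substring s[p..q] has no occurrence in s at any position i < p. Let K and h be such that h ≤ p, q < h + K, and h + K ≤ n. Then the substring s[h..h+K) has no occurrence in s at any position i < h. -/
theorem eq_of_forall_lt_eq_add {α : Type*} {s : ℕ → α} {i h K d j : ℕ}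
    (hocc : ∀ j < K, s (i + j) = s (h + j)) (hdj : d + j < K) :
    s (i + d + j) = s (h + d + j) := by
  simpa only [add_assoc] using hocc (d + j) hdj

theorem stmt5_general {α : Type*} (s : ℕ → α) (p q K h : ℕ)
    (hpq : p ≤ q)
    (hno : ∀ i < p, ¬(∀ j ≤ q - p, s (i + j) = s (p + j)))
    (hhp : h ≤ p) (hqh : q < h + K) :
    ∀ i < h, ¬(∀ j < K, s (i + j) = s (h + j)) := by
  intro i hi hocc
  refine hno (i + (p - h)) (by omega) fun j hj => ?_
  have hshift := eq_of_forall_lt_eq_add (d := p - h) (j := j) hocc (by omega)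
  rwa [Nat.add_sub_cancel' hhp] at hshift

/-- If the substring `s[p..q]` of a length-`n` string `s` has no occurrence at any
position `i < p`, and `[h..h+K)` is a window (within the string) covering `[p..q]`,
then the substring `s[h..h+K)` has no occurrence at any position `i < h`. -/
theorem stmt5 {α : Type*} (s : ℕ → α) (n p q K h : ℕ)
    (hpq : p ≤ q) (hqn : q < n)
    (hno : ∀ i < p, ¬(∀ j ≤ q - p, s (i + j) = s (p + j)))
    (hhp : h ≤ p) (hqh : q < h + K) (hKn : h + K ≤ n) :
    ∀ i < h, ¬(∀ j < K, s (i + j) = s (h + j)) :=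
  stmt5_general s p q K h hpq hno hhp hqh
end

section
/- Let s be a string of length n, let 0 ≤ p ≤ q < n, and suppose that the substring s[p..q] has no occurrence in s at any position i < p. Let K, h₁, h₂ be such that h₁ < h₂ ≤ p, q < h₁ + K, and h₂ + K ≤ n. Then s[h₁..h₁+K) ≠ s[h₂..h₂+K), i.e., the two length-K windows covering s[p..q] are distinct as strings. -/
/-! Equal length-`K` windows at `h₁ < h₂` shift every factor of the second window back by
`h₂ - h₁`, so `s[p..q]` would already occur at `h₁ + (p - h₂) < p`. -/

theorem factor_eq_shift_of_window_eq {α : Type*} {s : ℕ → α} {a b K : ℕ}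
    (hab : ∀ j < K, s (a + j) = s (b + j)) {i L : ℕ} (hbi : b ≤ i) (hiL : i + L < b + K) :
    ∀ j ≤ L, s (a + (i - b) + j) = s (i + j) := by
  intro j hj
  have h := hab (i - b + j) (by omega)
  rwa [← add_assoc, show b + (i - b + j) = i + j by omega] at h

theorem stmt6_general {α : Type*} (s : ℕ → α) (p q K h₁ h₂ : ℕ)
    (hpq : p ≤ q)
    (hno : ∀ i < p, ¬(∀ j ≤ q - p, s (i + j) = s (p + j)))
    (h12 : h₁ < h₂) (h2p : h₂ ≤ p) (hqh : q < h₁ + K) :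
    ¬(∀ j < K, s (h₁ + j) = s (h₂ + j)) := fun hwin =>
  hno (h₁ + (p - h₂)) (by omega) (factor_eq_shift_of_window_eq hwin h2p (by omega))

/-- If the substring `s[p..q]` of a length-`n` string `s` has no occurrence at any
position `i < p`, then two distinct length-`K` windows `[h₁..h₁+K)` and `[h₂..h₂+K)`
covering `[p..q]` (with `h₁ < h₂ ≤ p` and `q < h₁ + K`, `h₂ + K ≤ n`) are distinct
as strings. -/
theorem stmt6 {α : Type*} (s : ℕ → α) (n p q K h₁ h₂ : ℕ)
    (hpq : p ≤ q) (hqn : q < n)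
    (hno : ∀ i < p, ¬(∀ j ≤ q - p, s (i + j) = s (p + j)))
    (h12 : h₁ < h₂) (h2p : h₂ ≤ p) (hqh : q < h₁ + K) (hKn : h₂ + K ≤ n) :
    ¬(∀ j < K, s (h₁ + j) = s (h₂ + j)) :=
  stmt6_general s p q K h₁ h₂ hpq hno h12 h2p hqh
end

section
/- Let s be a string of length n, let 0 ≤ a ≤ b < n, and suppose that the substring s[a..b] has no occurrence in s at any position i < a. Let K be such that b − a < K ≤ b + 1 and a + K ≤ n. Then s has at least K − (b − a) distinct substrings of length K, i.e., d_K(s) ≥ K − (b − a). -/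
/-!
Let `w = s[a..a+m]` and suppose it does not occur before position `a`. Every length-`K`
window starting at a position `h ∈ [a + m + 1 - K, a]` contains `w` at offset `a - h`.
If two of these windows, at `h₁ < h₂`, were equal, the copy of `w` in the first one would be
an occurrence of `w` at `h₁ + (a - h₂) < a`. So these `K - m` windows are pairwise distinct.
-/

/-- `numDistinctSubstrings s n K` is the number of distinct substrings of length `K`
of the length-`n` string `s` (each substring of length `K` starting at a position
`h` with `h + K ≤ n` is viewed as a function `Fin K → α`). -/
def numDistinctSubstrings {α : Type*} [DecidableEq α] (s : ℕ → α) (n K : ℕ) : ℕ :=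
  ((Finset.range (n + 1 - K)).image (fun h => fun j : Fin K => s (h + (j : ℕ)))).card

def window {α : Type*} (s : ℕ → α) (K h : ℕ) : Fin K → α :=
  fun j => s (h + (j : ℕ))

section FirstOccurrence

variable {α : Type*} (s : ℕ → α) {a m K : ℕ}

theorem occurs_of_window_eq {h h' : ℕ} (hha : h ≤ a) (hK : a + m < h + K)
    (heq : window s K h' = window s K h) :
    ∀ j ≤ m, s (h' + (a - h) + j) = s (a + j) := by
  intro j hj
  have hjK : a - h + j < K := by omega
  have := congrFun heq ⟨a - h + j, hjK⟩
  simp only [window] at this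
  rw [add_assoc, this]
  congr 1
  omega

theorem injOn_window_Icc_of_not_occurs_before
    (hno : ∀ i < a, ¬ ∀ j ≤ m, s (i + j) = s (a + j)) :
    Set.InjOn (window s K) (Finset.Icc (a + m + 1 - K) a) := by
  have hne : ∀ h₁ ∈ Finset.Icc (a + m + 1 - K) a, ∀ h₂ ∈ Finset.Icc (a + m + 1 - K) a,
      h₁ < h₂ → window s K h₁ ≠ window s K h₂ := by
    intro h₁ _ h₂ hh₂ hlt heq
    rw [Finset.mem_Icc] at hh₂
    exact hno (h₁ + (a - h₂)) (by omega) (occurs_of_window_eq s hh₂.2 (by omega) heq)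
  intro h₁ hh₁ h₂ hh₂ heq
  rcases lt_trichotomy h₁ h₂ with hlt | rfl | hgt
  · exact absurd heq (hne h₁ hh₁ h₂ hh₂ hlt)
  · rfl
  · exact absurd heq.symm (hne h₂ hh₂ h₁ hh₁ hgt)

theorem sub_le_numDistinctSubstrings_of_not_occurs_before [DecidableEq α] {n : ℕ}
    (hno : ∀ i < a, ¬ ∀ j ≤ m, s (i + j) = s (a + j))
    (hK : K ≤ a + m + 1) (hKn : a + K ≤ n) :
    K - m ≤ numDistinctSubstrings s n K := by
  have hsub : Finset.Icc (a + m + 1 - K) a ⊆ Finset.range (n + 1 - K) := by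
    intro h hh
    rw [Finset.mem_Icc] at hh
    rw [Finset.mem_range]
    omega
  calc K - m = (Finset.Icc (a + m + 1 - K) a).card := by rw [Nat.card_Icc]; omega
    _ = ((Finset.Icc (a + m + 1 - K) a).image (window s K)).card :=
        (Finset.card_image_of_injOn (injOn_window_Icc_of_not_occurs_before s hno)).symm
    _ ≤ numDistinctSubstrings s n K :=
        Finset.card_le_card (Finset.image_subset_image hsub)

end FirstOccurrence

theorem stmt7_general {α : Type*} [DecidableEq α] (s : ℕ → α) (n a b K : ℕ)
    (hno : ∀ i < a, ¬(∀ j ≤ b - a, s (i + j) = s (a + j)))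
    (hK2 : K ≤ b + 1) (hKn : a + K ≤ n) :
    K - (b - a) ≤ numDistinctSubstrings s n K :=
  sub_le_numDistinctSubstrings_of_not_occurs_before s hno (by omega) hKn

/-- If the substring `s[a..b]` has no occurrence at any position `i < a`, and
`b - a < K ≤ b + 1` with `a + K ≤ n`, then `s` has at least `K - (b - a)` distinct
substrings of length `K`. -/
theorem stmt7 {α : Type*} [DecidableEq α] (s : ℕ → α) (n a b K : ℕ)
    (hab : a ≤ b) (hbn : b < n)
    (hno : ∀ i < a, ¬(∀ j ≤ b - a, s (i + j) = s (a + j)))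
    (hK1 : b - a < K) (hK2 : K ≤ b + 1) (hKn : a + K ≤ n) :
    K - (b - a) ≤ numDistinctSubstrings s n K :=
  stmt7_general s n a b K hno hK2 hKn
end
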